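/- (Theorem on constraints for projectable Poincaré–Cartan forms, mechanics.) Let k ≥ 1 and let s be an integer with k−1 ≤ s ≤ 2k−2. Let L : J^k → ℝ be a smooth Lagrangian and assume that every momentum function L^r_α (r = 1, …, k) is π^(2k−1)_s-basic. Let W ⊆ J^(2k−1) be open, let F : W → ℝ^n be smooth, and for p = (t, q_0, …, q_(2k−1)) ∈ W set X(p) := (1, q_1, …, q_(2k−1), F(p)) ∈ ℝ × (ℝ^n)^(2k). If i(X(p)) dΘ_L(p) = 0 for every p ∈ W, then for every j = 0, 1, …, 2k−s−2 and every α: the function D_t^j L^0_α is π-basic of order s+1+j ≤ 2k−1 (hence may be regarded as a smooth function on J^(2k−1)), and it vanishes at every point of W. -/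

import Mathlib

noncomputable section

/-- The `j`-th order jet space `J^j = ℝ × (ℝ^n)^(j+1)` of curves in `ℝ^n`,
with coordinates `(t, q_0, …, q_j)`. -/
abbrev Jet (n j : ℕ) : Type := ℝ × (Fin (j + 1) → Fin n → ℝ)

namespace Jet

variable {n : ℕ}

/-- The projection (truncation) `J^j → J^s` forgetting the coordinates `q_i` for `i > s`
(padding with `0` in the irrelevant case `s > j`). -/
def projTo {j : ℕ} (s : ℕ) (p : Jet n j) : Jet n s :=
  (p.1, fun i α => if h : (i : ℕ) < j + 1 then p.2 ⟨i, h⟩ α else 0)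

/-- The coordinate function `q_i^α` (zero if out of range). -/
def coordq {j : ℕ} (i : ℕ) (α : Fin n) (p : Jet n j) : ℝ :=
  if h : i < j + 1 then p.2 ⟨i, h⟩ α else 0

/-- The tangent vector in the `t`-direction. -/
def vt {j : ℕ} : Jet n j := (1, 0)

/-- The tangent vector in the `q_i^α`-direction (zero vector if `i` is out of range). -/
def vq {j : ℕ} (i : ℕ) (α : Fin n) : Jet n j :=
  (0, fun i' α' => if (i' : ℕ) = i ∧ α' = α then 1 else 0)

/-- The partial derivative `∂f/∂t`. -/
def pdt {j : ℕ} (f : Jet n j → ℝ) (p : Jet n j) : ℝ := fderiv ℝ f p vt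

/-- The partial derivative `∂f/∂q_i^α`. -/
def pdq {j : ℕ} (i : ℕ) (α : Fin n) (f : Jet n j → ℝ) (p : Jet n j) : ℝ :=
  fderiv ℝ f p (vq i α)

/-- The total time derivative `D_t f : J^(j+1) → ℝ` of a function `f : J^j → ℝ`:
`D_t f = ∂f/∂t + Σ_{i=0}^{j} Σ_α q_(i+1)^α ∂f/∂q_i^α`. -/
def Dt {j : ℕ} (f : Jet n j → ℝ) (p : Jet n (j + 1)) : ℝ :=
  pdt f (projTo j p) +
    ∑ i : Fin (j + 1), ∑ α : Fin n, p.2 i.succ α * pdq (i : ℕ) α f (projTo j p)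

/-- The iterated total time derivative `D_t^i : C^∞(J^j) → C^∞(J^(j+i))`. -/
def DtIter {j : ℕ} : (i : ℕ) → (Jet n j → ℝ) → Jet n (j + i) → ℝ
  | 0, f => f
  | i + 1, f => Dt (DtIter i f)

/-- `f : J^j → ℝ` is `π^j_s`-basic: it factors through the projection `J^j → J^s`. -/
def Basic {j : ℕ} (s : ℕ) (f : Jet n j → ℝ) : Prop :=
  ∃ g : Jet n s → ℝ, ∀ p, f p = g (projTo s p)

/-- The momentum function `L^r_α := Σ_{i=0}^{k−r} (−1)^i D_t^i(∂L/∂q_(r+i)^α)`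
of a `k`-th order Lagrangian, regarded as a function on `J^(2k−1)`. -/
def mom (k : ℕ) (L : Jet n k → ℝ) (r : ℕ) (α : Fin n) (p : Jet n (2 * k - 1)) : ℝ :=
  ∑ i ∈ Finset.range (k - r + 1),
    (-1 : ℝ) ^ i * DtIter i (pdq (r + i) α L) (projTo (k + i) p)

/-- The Euler–Lagrange function `L^0_α := ∂L/∂q_0^α − D_t L^1_α : J^(2k) → ℝ`. -/
def EL (k : ℕ) (L : Jet n k → ℝ) (α : Fin n) (p : Jet n (2 * k)) : ℝ :=
  pdq 0 α L (projTo k p) - Dt (mom k L 1 α) (projTo (2 * k - 1 + 1) p)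

/-- The coordinate covector `dt` on `J^j`. -/
def dt (j : ℕ) : Jet n j →L[ℝ] ℝ := ContinuousLinearMap.fst ℝ ℝ (Fin (j + 1) → Fin n → ℝ)

/-- The coordinate covector `dq_i^α` on `J^j` (zero if out of range). -/
def dq (j : ℕ) (i : ℕ) (α : Fin n) : Jet n j →L[ℝ] ℝ :=
  if h : i < j + 1 then
    (ContinuousLinearMap.proj α : (Fin n → ℝ) →L[ℝ] ℝ).comp
      (((ContinuousLinearMap.proj (⟨i, h⟩ : Fin (j + 1)) :
          (Fin (j + 1) → Fin n → ℝ) →L[ℝ] (Fin n → ℝ))).comp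
        (ContinuousLinearMap.snd ℝ ℝ (Fin (j + 1) → Fin n → ℝ)))
  else 0

/-- The Poincaré–Cartan 1-form
`Θ_L = Σ_{r=1}^k Σ_α L^r_α dq_(r−1)^α + (L − Σ_{r=1}^k Σ_α L^r_α q_r^α) dt`
of a `k`-th order Lagrangian, as a covector-valued map on `J^(2k−1)`. -/
def PC (k : ℕ) (L : Jet n k → ℝ) (p : Jet n (2 * k - 1)) : Jet n (2 * k - 1) →L[ℝ] ℝ :=
  (∑ r ∈ Finset.Icc 1 k, ∑ α : Fin n, mom k L r α p • dq (2 * k - 1) (r - 1) α) +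
    (L (projTo k p) -
        ∑ r ∈ Finset.Icc 1 k, ∑ α : Fin n, mom k L r α p * coordq r α p) • dt (2 * k - 1)

/-- `dΘ_L(p)(u,v) := (DΘ_L(p)u)(v) − (DΘ_L(p)v)(u)`, where `D` is the Fréchet derivative. -/
def dPC (k : ℕ) (L : Jet n k → ℝ) (p u v : Jet n (2 * k - 1)) : ℝ :=
  fderiv ℝ (PC k L) p u v - fderiv ℝ (PC k L) p v u

/-- The `j`-th prolongation `j^j c : ℝ → J^j` of a curve `c : ℝ → ℝ^n`. -/
def prol (j : ℕ) (c : ℝ → Fin n → ℝ) (t : ℝ) : Jet n j :=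
  (t, fun i α => iteratedDeriv (i : ℕ) c t α)

end Jet

namespace Jet

/-- The holonomic vector field `X(p) := (1, q_1, …, q_(2k−1), F(p))` determined by
`F : J^(2k−1) → ℝ^n`. -/
def hvf {n k : ℕ} (F : Jet n (2 * k - 1) → Fin n → ℝ) (p : Jet n (2 * k - 1)) :
    Jet n (2 * k - 1) :=
  (1, fun i α => if h : (i : ℕ) + 1 < 2 * k - 1 + 1 then p.2 ⟨(i : ℕ) + 1, h⟩ α else F p α)

end Jet
namespace Jet

variable {n : ℕ}

/-- `projTo` as a continuous linear map. -/
def projCLM (j s : ℕ) : Jet n j →L[ℝ] Jet n s :=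
  LinearMap.toContinuousLinearMap
    { toFun := projTo s
      map_add' := by
        intro p q
        refine Prod.ext rfl ?_
        funext i α
        show (if h : (i:ℕ) < j + 1 then (p.2 + q.2) ⟨i,h⟩ α else 0) = _
        by_cases h : (i:ℕ) ≤ j <;> simp [projTo, h]
      map_smul' := by
        intro c p
        refine Prod.ext rfl ?_
        funext i α
        show (if h : (i:ℕ) < j + 1 then (c • p.2) ⟨i,h⟩ α else 0) = _
        by_cases h : (i:ℕ) ≤ j <;> simp [projTo, h] }

@[simp] lemma projCLM_apply {j s : ℕ} (p : Jet n j) : projCLM j s p = projTo s p := rfl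

lemma projTo_projTo {j a b : ℕ} (hab : a ≤ b) (p : Jet n j) :
    projTo a (projTo b p) = projTo a p := by
  refine Prod.ext rfl ?_
  funext i α
  have hi : (i:ℕ) < b + 1 := lt_of_lt_of_le i.2 (by omega)
  show (if h : (i:ℕ) < b + 1 then (projTo b p).2 ⟨i,h⟩ α else 0) = _
  rw [dif_pos hi]
  show (if h : (i:ℕ) < j + 1 then p.2 ⟨i,h⟩ α else 0) = _
  rfl

@[simp] lemma projTo_self {j : ℕ} (p : Jet n j) : projTo j p = p := by
  refine Prod.ext rfl ?_
  funext i α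
  show (if h : (i:ℕ) < j + 1 then p.2 ⟨i,h⟩ α else 0) = _
  rw [dif_pos i.2]

lemma contDiff_projTo {j s : ℕ} : ContDiff ℝ (⊤:ℕ∞) (projTo s : Jet n j → Jet n s) :=
  (projCLM j s).contDiff

/-- Decomposition of a tangent vector into coordinate directions. -/
lemma vec_decomp {j : ℕ} (u : Jet n j) :
    u = u.1 • (vt : Jet n j) + ∑ i : Fin (j+1), ∑ β : Fin n, u.2 i β • vq (i:ℕ) β := by
  refine Prod.ext ?_ ?_
  · simp [vt, vq, Prod.fst_sum]
  · funext i' α'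
    simp only [Prod.snd_add, Prod.snd_sum, Prod.smul_snd, vt, vq, smul_zero]
    simp only [zero_add, Finset.sum_apply, Pi.smul_apply, smul_eq_mul]
    rw [Finset.sum_eq_single i']
    · rw [Finset.sum_eq_single α']
      · simp
      · intro b _ hb
        simp [Ne.symm hb]
      · simp
    · intro b _ hb
      apply Finset.sum_eq_zero; intro c _
      have hbb : ¬((i':ℕ) = (b:ℕ)) := fun h => hb (Fin.ext h.symm)
      simp [hbb]
    · simp

end Jet
namespace Jet

variable {n : ℕ}

lemma fderiv_vec {j : ℕ} (f : Jet n j → ℝ) (x u : Jet n j) :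
    fderiv ℝ f x u = u.1 * fderiv ℝ f x vt +
      ∑ i : Fin (j+1), ∑ β : Fin n, u.2 i β * fderiv ℝ f x (vq (i:ℕ) β) := by
  conv_lhs => rw [vec_decomp u]
  rw [map_add, map_smul, map_sum]
  simp [map_sum, smul_eq_mul]

lemma Dt_eq {j : ℕ} (f : Jet n j → ℝ) (p : Jet n (j+1)) :
    Dt f p = fderiv ℝ f (projTo j p) ((1, fun i β => p.2 i.succ β) : Jet n j) := by
  rw [fderiv_vec]
  simp [Dt, pdt, pdq]

@[simp] lemma dt_apply {j : ℕ} (p : Jet n j) : dt j p = p.1 := rfl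

lemma dq_apply {j : ℕ} (i : ℕ) (α : Fin n) (p : Jet n j) : dq j i α p = coordq i α p := by
  unfold dq coordq
  split <;> rfl

lemma dq_apply_vq {j : ℕ} (i i' : ℕ) (β α' : Fin n) :
    dq j i β (vq i' α' : Jet n j) = if i = i' ∧ β = α' ∧ i < j + 1 then 1 else 0 := by
  rw [dq_apply]
  unfold coordq vq
  by_cases h : i < j + 1
  · rw [dif_pos h]
    by_cases h1 : i = i' <;> by_cases h2 : β = α'
    · subst h1; subst h2; simp [h]
    · simp [h1, h2]
    · simp [h1, h2]
    · simp [h1, h2]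
  · rw [dif_neg h]
    simp [h]

@[simp] lemma dt_apply_vq {j : ℕ} (i : ℕ) (α : Fin n) : dt j (vq i α : Jet n j) = 0 := rfl

lemma fderiv_coordq {j : ℕ} (i : ℕ) (α : Fin n) (x : Jet n j) :
    fderiv ℝ (coordq i α : Jet n j → ℝ) x = dq j i α := by
  have h : (coordq i α : Jet n j → ℝ) = dq j i α := funext fun p => (dq_apply i α p).symm
  rw [h]
  exact ContinuousLinearMap.fderiv _

lemma contDiff_coordq {j : ℕ} (i : ℕ) (α : Fin n) :
    ContDiff ℝ (⊤:ℕ∞) (coordq i α : Jet n j → ℝ) := by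
  have h : (coordq i α : Jet n j → ℝ) = dq j i α := funext fun p => (dq_apply i α p).symm
  rw [h]; exact (dq j i α).contDiff

lemma fderiv_basic_comp {m j : ℕ} (g : Jet n m → ℝ) (hg : ContDiff ℝ (⊤:ℕ∞) g) (x : Jet n j) :
    fderiv ℝ (fun p => g (projTo m p)) x = (fderiv ℝ g (projTo m x)).comp (projCLM j m) := by
  have h1 : (fun p : Jet n j => g (projTo m p)) = g ∘ (projCLM j m) := rfl
  rw [h1, fderiv_comp x (hg.differentiable (by simp)).differentiableAt
    ((projCLM j m).differentiableAt), ContinuousLinearMap.fderiv]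
  rfl

lemma Dt_basic {m j : ℕ} (hm : m ≤ j) (g : Jet n m → ℝ) (hg : ContDiff ℝ (⊤:ℕ∞) g)
    (p : Jet n (j+1)) :
    Dt (fun x : Jet n j => g (projTo m x)) p = Dt g (projTo (m+1) p) := by
  rw [Dt_eq, Dt_eq, fderiv_basic_comp g hg, ContinuousLinearMap.comp_apply, projCLM_apply]
  have e1 : projTo m (projTo j p) = projTo m (projTo (m+1) p) := by
    rw [projTo_projTo hm, projTo_projTo (Nat.le_succ m)]
  have e2 : projTo m ((1, fun i β => p.2 i.succ β) : Jet n j) =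
      ((1, fun i β => (projTo (m+1) p).2 i.succ β) : Jet n m) := by
    refine Prod.ext rfl ?_
    funext i β
    have hi : (i:ℕ) < j + 1 := lt_of_lt_of_le i.2 (by omega)
    show (if h : (i:ℕ) < j + 1 then p.2 (⟨(i:ℕ),h⟩ : Fin (j+1)).succ β else 0) = _
    rw [dif_pos hi]
    show p.2 ⟨(i:ℕ)+1, by omega⟩ β =
      (if h : ((i.succ):ℕ) < (j+1)+1 then p.2 ⟨(i.succ:ℕ), h⟩ β else 0)
    rw [dif_pos (by omega : ((i.succ):ℕ) < (j+1)+1)]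
    rfl
  rw [e1, e2]

lemma contDiff_Dt {j : ℕ} (f : Jet n j → ℝ) (hf : ContDiff ℝ (⊤:ℕ∞) f) :
    ContDiff ℝ (⊤:ℕ∞) (Dt f) := by
  unfold Dt pdt pdq
  apply ContDiff.add
  · exact ((hf.fderiv_right (by simp)).clm_apply contDiff_const).comp contDiff_projTo
  · apply ContDiff.sum
    intro i _
    apply ContDiff.sum
    intro α _
    apply ContDiff.mul
    · exact ((ContinuousLinearMap.proj α : (Fin n → ℝ) →L[ℝ] ℝ).comp
        ((ContinuousLinearMap.proj i.succ :
            (Fin (j+1+1) → Fin n → ℝ) →L[ℝ] (Fin n → ℝ)).comp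
          (ContinuousLinearMap.snd ℝ ℝ _))).contDiff
    · exact ((hf.fderiv_right (by simp)).clm_apply contDiff_const).comp contDiff_projTo

lemma contDiff_DtIter {j : ℕ} (i : ℕ) (f : Jet n j → ℝ) (hf : ContDiff ℝ (⊤:ℕ∞) f) :
    ContDiff ℝ (⊤:ℕ∞) (DtIter i f) := by
  induction i with
  | zero => exact hf
  | succ i ih => exact contDiff_Dt _ ih

lemma DtIter_basic {m j : ℕ} (hm : m ≤ j) (g : Jet n m → ℝ) (hg : ContDiff ℝ (⊤:ℕ∞) g) :
    ∀ (i : ℕ) (p : Jet n (j + i)),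
      DtIter i (fun x : Jet n j => g (projTo m x)) p = DtIter i g (projTo (m+i) p)
  | 0, p => rfl
  | (i+1), p => by
    show Dt (DtIter i fun x : Jet n j => g (projTo m x)) p = Dt (DtIter i g) (projTo (m+i+1) p)
    have hfun : (DtIter i fun x : Jet n j => g (projTo m x)) =
        fun q : Jet n (j+i) => (DtIter i g) (projTo (m+i) q) :=
      funext (DtIter_basic hm g hg i)
    rw [hfun]
    exact Dt_basic (Nat.add_le_add_right hm i) (DtIter i g) (contDiff_DtIter i g hg) p

end Jet
namespace Jet

variable {n : ℕ}

lemma projCLM_coe {j s : ℕ} : ⇑(projCLM j s : Jet n j →L[ℝ] Jet n s) = projTo s := rfl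

lemma contDiff_pdq {j : ℕ} (i : ℕ) (α : Fin n) (f : Jet n j → ℝ) (hf : ContDiff ℝ (⊤:ℕ∞) f) :
    ContDiff ℝ (⊤:ℕ∞) (pdq i α f) :=
  (hf.fderiv_right (by simp)).clm_apply contDiff_const

lemma contDiff_mom (k : ℕ) (L : Jet n k → ℝ) (hL : ContDiff ℝ (⊤:ℕ∞) L) (r : ℕ) (α : Fin n) :
    ContDiff ℝ (⊤:ℕ∞) (mom k L r α) := by
  unfold mom
  apply ContDiff.sum
  intro i _
  exact contDiff_const.mul
    ((contDiff_DtIter i _ (contDiff_pdq _ _ _ hL)).comp contDiff_projTo)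

lemma contDiff_PC (k : ℕ) (L : Jet n k → ℝ) (hL : ContDiff ℝ (⊤:ℕ∞) L) :
    ContDiff ℝ (⊤:ℕ∞) (PC k L) := by
  unfold PC
  apply ContDiff.add
  · apply ContDiff.sum
    intro r _
    apply ContDiff.sum
    intro α _
    exact (contDiff_mom k L hL r α).smul contDiff_const
  · apply ContDiff.fun_smul _ contDiff_const
    apply ContDiff.sub (hL.comp contDiff_projTo)
    apply ContDiff.sum
    intro r _
    apply ContDiff.sum
    intro α _
    exact (contDiff_mom k L hL r α).mul (contDiff_coordq r α)

lemma PC_apply (k : ℕ) (L : Jet n k → ℝ) (p v : Jet n (2*k-1)) :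
    PC k L p v =
      (∑ r ∈ Finset.Icc 1 k, ∑ β : Fin n, mom k L r β p * dq (2*k-1) (r-1) β v) +
      (L (projTo k p) -
        ∑ r ∈ Finset.Icc 1 k, ∑ β : Fin n, mom k L r β p * coordq r β p) * v.1 := by
  unfold PC
  simp [ContinuousLinearMap.sum_apply, smul_eq_mul]

lemma fderiv_PC_swap (k : ℕ) (L : Jet n k → ℝ) (hL : ContDiff ℝ (⊤:ℕ∞) L)
    (p u v : Jet n (2*k-1)) :
    fderiv ℝ (fun p' => PC k L p' v) p u = fderiv ℝ (PC k L) p u v := by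
  have h : (fun p' => PC k L p' v) = (ContinuousLinearMap.apply ℝ ℝ v) ∘ (PC k L) := rfl
  rw [h, fderiv_comp p ((ContinuousLinearMap.apply ℝ ℝ v).differentiableAt)
    (((contDiff_PC k L hL).differentiable (by simp)).differentiableAt),
    ContinuousLinearMap.fderiv]
  rfl

lemma PC_apply_vq (k : ℕ) (hk : 1 ≤ k) (L : Jet n k → ℝ) (p : Jet n (2*k-1)) (α : Fin n) :
    PC k L p (vq 0 α) = mom k L 1 α p := by
  rw [PC_apply]
  have hvq1 : (vq 0 α : Jet n (2*k-1)).1 = 0 := rfl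
  rw [hvq1, mul_zero, add_zero]
  rw [Finset.sum_eq_single 1]
  · rw [Finset.sum_eq_single α]
    · rw [dq_apply_vq]
      simp
    · intro β _ hβ
      rw [dq_apply_vq]
      simp [hβ]
    · simp
  · intro r hr hr1
    apply Finset.sum_eq_zero
    intro β _
    rw [dq_apply_vq]
    have h0 : ¬(r - 1 = 0) := by
      have := Finset.mem_Icc.mp hr
      omega
    simp [h0]
  · intro h
    exact absurd (Finset.mem_Icc.mpr ⟨le_refl 1, hk⟩) h

lemma projTo_vq {j s : ℕ} (hs : s ≤ j) (i : ℕ) (α : Fin n) :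
    projTo s (vq i α : Jet n j) = (vq i α : Jet n s) := by
  refine Prod.ext rfl ?_
  funext i' α'
  have hi : (i':ℕ) < j + 1 := lt_of_lt_of_le i'.2 (by omega)
  show (if h : (i':ℕ) < j + 1 then (vq i α : Jet n j).2 ⟨i',h⟩ α' else 0) = _
  rw [dif_pos hi]
  rfl

lemma hvf_coord {k : ℕ} (hk : 1 ≤ k) (r : ℕ) (hr : r ∈ Finset.Icc 1 k) (β : Fin n)
    (F : Jet n (2*k-1) → Fin n → ℝ) (p : Jet n (2*k-1)) :
    dq (2*k-1) (r-1) β (hvf F p) = coordq r β p := by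
  obtain ⟨hr1, hrk⟩ := Finset.mem_Icc.mp hr
  rw [dq_apply]
  unfold coordq hvf
  have h1 : r - 1 < 2*k-1+1 := by omega
  rw [dif_pos h1]
  have h2 : (r-1)+1 < 2*k-1+1 := by omega
  show (if h : (r-1)+1 < 2*k-1+1 then p.2 ⟨(r-1)+1, h⟩ β else F p β) = _
  rw [dif_pos h2]
  have h3 : r < 2*k-1+1 := by omega
  rw [dif_pos h3]
  have e4 : (⟨(r-1)+1, h2⟩ : Fin (2*k-1+1)) = ⟨r, h3⟩ := by apply Fin.ext; show (r-1)+1 = r; omega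
  rw [e4]

lemma basic_rep {j m : ℕ} (hmj : m ≤ j) (f : Jet n j → ℝ) (hf : Basic m f) :
    ∀ p, f p = (fun q : Jet n m => f (projTo j q)) (projTo m p) := by
  obtain ⟨g, hg⟩ := hf
  intro p
  rw [hg]
  show g (projTo m p) = f (projTo j (projTo m p))
  rw [hg, projTo_projTo hmj, projTo_self]

lemma DtIter_vanish {m : ℕ} (G : Jet n m → ℝ) (U : Set (Jet n m)) (hU : IsOpen U)
    (hG : ∀ q ∈ U, G q = 0) :
    ∀ (i : ℕ) (q : Jet n (m + i)), projTo m q ∈ U → DtIter i G q = 0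
  | 0, q, hq => by
    show G q = 0
    rw [← projTo_self (j := m) q]
    exact hG _ hq
  | (i+1), q, hq => by
    show Dt (DtIter i G) q = 0
    rw [Dt_eq]
    have hzero : fderiv ℝ (DtIter i G) (projTo (m+i) q) = 0 := by
      have hopen : IsOpen (projTo m ⁻¹' U : Set (Jet n (m+i))) := by
        rw [← projCLM_coe]
        exact hU.preimage (projCLM (m+i) m).continuous
      have hmem : projTo m (projTo (m+i) q) ∈ U := by
        rw [projTo_projTo (Nat.le_add_right m i)]
        exact hq
      have hev : (DtIter i G) =ᶠ[nhds (projTo (m+i) q)] (fun _ => (0:ℝ)) := by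
        filter_upwards [hopen.mem_nhds hmem] with y hy using DtIter_vanish G U hU hG i y hy
      rw [hev.fderiv_eq]
      exact fderiv_const_apply 0
    rw [hzero]
    rfl

end Jet
namespace Jet

variable {n : ℕ}

lemma fderiv_PC_hvf {k : ℕ} (hk : 1 ≤ k) (L : Jet n k → ℝ) (hL : ContDiff ℝ (⊤:ℕ∞) L)
    (F : Jet n (2*k-1) → Fin n → ℝ) (p : Jet n (2*k-1)) (α : Fin n) :
    fderiv ℝ (fun p' => PC k L p' (hvf F p)) p (vq 0 α) = pdq 0 α L (projTo k p) := by
  have hX1 : (hvf F p).1 = 1 := rfl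
  have hfun : (fun p' => PC k L p' (hvf F p)) = fun p' =>
      (∑ r ∈ Finset.Icc 1 k, ∑ β : Fin n, mom k L r β p' * coordq r β p) +
      ((L (projTo k p')) -
        ∑ r ∈ Finset.Icc 1 k, ∑ β : Fin n, mom k L r β p' * coordq r β p') := by
    funext p'
    rw [PC_apply, hX1, mul_one]
    congr 1
    refine Finset.sum_congr rfl fun r hr => Finset.sum_congr rfl fun β _ => ?_
    rw [hvf_coord hk r hr β F p]
  rw [hfun]
  have hmdiff : ∀ (r : ℕ) (β : Fin n), DifferentiableAt ℝ (mom k L r β) p :=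
    fun r β => ((contDiff_mom k L hL r β).differentiable (by simp)).differentiableAt
  have hcdiff : ∀ (r : ℕ) (β : Fin n),
      DifferentiableAt ℝ (fun p' : Jet n (2*k-1) => coordq r β p') p :=
    fun r β => ((contDiff_coordq r β).differentiable (by simp)).differentiableAt
  have hLdiff : DifferentiableAt ℝ (fun p' : Jet n (2*k-1) => L (projTo k p')) p :=
    ((hL.comp contDiff_projTo).differentiable (by simp)).differentiableAt
  have hS1 : DifferentiableAt ℝ
      (fun p' => ∑ r ∈ Finset.Icc 1 k, ∑ β : Fin n, mom k L r β p' * coordq r β p) p :=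
    DifferentiableAt.fun_sum fun r _ => DifferentiableAt.fun_sum fun β _ => (hmdiff r β).mul_const _
  have hS2 : DifferentiableAt ℝ
      (fun p' => ∑ r ∈ Finset.Icc 1 k, ∑ β : Fin n, mom k L r β p' * coordq r β p') p :=
    DifferentiableAt.fun_sum fun r _ => DifferentiableAt.fun_sum fun β _ => (hmdiff r β).mul (hcdiff r β)
  rw [fderiv_fun_add hS1 (hLdiff.fun_sub hS2), ContinuousLinearMap.add_apply,
    fderiv_fun_sub hLdiff hS2, ContinuousLinearMap.sub_apply]
  rw [fderiv_fun_sum (fun r _ => DifferentiableAt.fun_sum fun β _ => (hmdiff r β).mul_const _),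
    ContinuousLinearMap.sum_apply]
  rw [fderiv_fun_sum (fun r _ => DifferentiableAt.fun_sum fun β _ => (hmdiff r β).fun_mul (hcdiff r β)),
    ContinuousLinearMap.sum_apply]
  have e1 : ∀ r ∈ Finset.Icc 1 k,
      (fderiv ℝ (fun p' => ∑ β : Fin n, mom k L r β p' * coordq r β p) p) (vq 0 α) =
      ∑ β : Fin n, coordq r β p * fderiv ℝ (mom k L r β) p (vq 0 α) := by
    intro r _
    rw [fderiv_fun_sum (fun β _ => (hmdiff r β).mul_const _), ContinuousLinearMap.sum_apply]
    refine Finset.sum_congr rfl fun β _ => ?_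
    rw [fderiv_mul_const (hmdiff r β), ContinuousLinearMap.smul_apply, smul_eq_mul]
  have e2 : ∀ r ∈ Finset.Icc 1 k,
      (fderiv ℝ (fun p' => ∑ β : Fin n, mom k L r β p' * coordq r β p') p) (vq 0 α) =
      ∑ β : Fin n, coordq r β p * fderiv ℝ (mom k L r β) p (vq 0 α) := by
    intro r hr
    rw [fderiv_fun_sum (fun β _ => (hmdiff r β).fun_mul (hcdiff r β)), ContinuousLinearMap.sum_apply]
    refine Finset.sum_congr rfl fun β _ => ?_
    rw [fderiv_fun_mul (hmdiff r β) (hcdiff r β), ContinuousLinearMap.add_apply,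
      ContinuousLinearMap.smul_apply, ContinuousLinearMap.smul_apply, smul_eq_mul, smul_eq_mul]
    rw [fderiv_coordq, dq_apply_vq]
    have hr0 : ¬(r = 0) := by
      have := Finset.mem_Icc.mp hr
      omega
    rw [if_neg (by tauto)]
    ring
  rw [Finset.sum_congr rfl e1, Finset.sum_congr rfl e2]
  have e3 : fderiv ℝ (fun p' : Jet n (2*k-1) => L (projTo k p')) p (vq 0 α) =
      pdq 0 α L (projTo k p) := by
    rw [fderiv_basic_comp L hL p, ContinuousLinearMap.comp_apply, projCLM_apply,
      projTo_vq (by omega) 0 α]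
    rfl
  rw [e3]
  ring

end Jet

/-- Constraints for projectable Poincaré–Cartan forms, mechanics.
If all momenta `L^r_α` are `π^(2k−1)_s`-basic and the holonomic vector field determined by
`F` satisfies `i(X(p))dΘ_L(p) = 0` on an open set `W`, then for `j = 0, …, 2k−s−2` the
function `D_t^j L^0_α` is basic of order `s+1+j` and vanishes at every point of `W`. -/
theorem stmt1 {n : ℕ} (hn : 1 ≤ n) (k s : ℕ) (hk : 1 ≤ k)
    (hs1 : k - 1 ≤ s) (hs2 : s ≤ 2 * k - 2)
    (L : Jet n k → ℝ) (hL : ContDiff ℝ (⊤ : ℕ∞) L)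
    (hbasic : ∀ r ∈ Finset.Icc 1 k, ∀ α : Fin n, Jet.Basic s (Jet.mom k L r α))
    (W : Set (Jet n (2 * k - 1))) (hW : IsOpen W)
    (F : Jet n (2 * k - 1) → Fin n → ℝ) (hF : ContDiffOn ℝ (⊤ : ℕ∞) F W)
    (hsol : ∀ p ∈ W, ∀ v : Jet n (2 * k - 1), Jet.dPC k L p (Jet.hvf F p) v = 0) :
    ∀ j : ℕ, j ≤ 2 * k - s - 2 → ∀ α : Fin n,
      Jet.Basic (s + 1 + j) (Jet.DtIter j (Jet.EL k L α)) ∧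
      ∀ p ∈ W, Jet.DtIter j (Jet.EL k L α) (Jet.projTo (2 * k + j) p) = 0 := by
  intro j hj α
  have hs2' : s ≤ 2*k-1 := by omega
  have hks : k ≤ s + 1 := by omega
  set M := Jet.mom k L 1 α with hM
  have hMbasic : Jet.Basic s M := hbasic 1 (Finset.mem_Icc.mpr ⟨le_refl 1, hk⟩) α
  set G₁ : Jet n s → ℝ := fun q => M (Jet.projTo (2*k-1) q) with hG₁
  have hMrep : ∀ p, M p = G₁ (Jet.projTo s p) := Jet.basic_rep hs2' M hMbasic
  have hMsmooth : ContDiff ℝ (⊤:ℕ∞) M := Jet.contDiff_mom k L hL 1 α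
  have hG₁smooth : ContDiff ℝ (⊤:ℕ∞) G₁ := hMsmooth.comp Jet.contDiff_projTo
  set G : Jet n (s+1) → ℝ := fun q => Jet.pdq 0 α L (Jet.projTo k q) - Jet.Dt G₁ q with hGdef
  have hGsmooth : ContDiff ℝ (⊤:ℕ∞) G :=
    ((Jet.contDiff_pdq 0 α L hL).comp Jet.contDiff_projTo).sub (Jet.contDiff_Dt _ hG₁smooth)
  have hEL : ∀ p : Jet n (2*k), Jet.EL k L α p = G (Jet.projTo (s+1) p) := by
    intro p
    show Jet.pdq 0 α L (Jet.projTo k p) - Jet.Dt M (Jet.projTo (2*k-1+1) p) = _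
    rw [show M = fun x : Jet n (2*k-1) => G₁ (Jet.projTo s x) from funext hMrep]
    rw [Jet.Dt_basic hs2' G₁ hG₁smooth (Jet.projTo (2*k-1+1) p)]
    rw [Jet.projTo_projTo (show s+1 ≤ 2*k-1+1 by omega)]
    show _ = Jet.pdq 0 α L (Jet.projTo k (Jet.projTo (s+1) p)) - Jet.Dt G₁ (Jet.projTo (s+1) p)
    rw [Jet.projTo_projTo hks]
  have hGvanish : ∀ p ∈ W, G (Jet.projTo (s+1) p) = 0 := by
    intro p hp
    have h0 := hsol p hp (Jet.vq 0 α)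
    unfold Jet.dPC at h0
    have ha : fderiv ℝ (Jet.PC k L) p (Jet.hvf F p) (Jet.vq 0 α) =
        Jet.Dt G₁ (Jet.projTo (s+1) p) := by
      rw [← Jet.fderiv_PC_swap k L hL]
      rw [show (fun p' => Jet.PC k L p' (Jet.vq 0 α)) = M from
        funext fun p' => Jet.PC_apply_vq k hk L p' α]
      rw [show M = fun x : Jet n (2*k-1) => G₁ (Jet.projTo s x) from funext hMrep]
      rw [Jet.fderiv_basic_comp G₁ hG₁smooth p, ContinuousLinearMap.comp_apply,
        Jet.projCLM_apply, Jet.Dt_eq]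
      have e1 : Jet.projTo s (Jet.projTo (s+1) p) = Jet.projTo s p :=
        Jet.projTo_projTo (Nat.le_succ s) p
      have e2 : Jet.projTo s (Jet.hvf F p) =
          ((1, fun i β => (Jet.projTo (s+1) p).2 i.succ β) : Jet n s) := by
        refine Prod.ext rfl ?_
        funext i β
        have hi2 := i.2
        have hi : (i:ℕ) < 2*k-1+1 := by omega
        show (if h : (i:ℕ) < 2*k-1+1 then (Jet.hvf F p).2 ⟨i,h⟩ β else 0) = _
        rw [dif_pos hi]
        show (if h : (i:ℕ)+1 < 2*k-1+1 then p.2 ⟨(i:ℕ)+1,h⟩ β else F p β) = _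
        rw [dif_pos (show (i:ℕ)+1 < 2*k-1+1 by omega)]
        show _ = (if h : ((i.succ):ℕ) < 2*k-1+1 then p.2 ⟨((i.succ):ℕ),h⟩ β else 0)
        rw [dif_pos (show ((i.succ):ℕ) < 2*k-1+1 by simp; omega)]
        rfl
      rw [e1, e2]
    have hb : fderiv ℝ (Jet.PC k L) p (Jet.vq 0 α) (Jet.hvf F p) = Jet.pdq 0 α L (Jet.projTo k p) := by
      rw [← Jet.fderiv_PC_swap k L hL]
      exact Jet.fderiv_PC_hvf hk L hL F p α
    rw [ha, hb] at h0
    show Jet.pdq 0 α L (Jet.projTo k (Jet.projTo (s+1) p)) - Jet.Dt G₁ (Jet.projTo (s+1) p) = 0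
    rw [Jet.projTo_projTo hks]
    linarith
  have hELfun : Jet.EL k L α = fun x : Jet n (2*k) => G (Jet.projTo (s+1) x) := funext hEL
  constructor
  · refine ⟨Jet.DtIter j G, fun p => ?_⟩
    rw [hELfun]
    exact Jet.DtIter_basic (show s+1 ≤ 2*k by omega) G hGsmooth j p
  · intro p hp
    rw [hELfun]
    rw [Jet.DtIter_basic (show s+1 ≤ 2*k by omega) G hGsmooth j (Jet.projTo (2*k+j) p)]
    rw [Jet.projTo_projTo (show s+1+j ≤ 2*k+j by omega)]
    refine Jet.DtIter_vanish G (Jet.projTo (s+1) '' W) ?_ ?_ j (Jet.projTo (s+1+j) p) ?_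
    · have hsurj : Function.Surjective
          (Jet.projCLM (2*k-1) (s+1) : Jet n (2*k-1) →L[ℝ] Jet n (s+1)) := by
        intro y
        exact ⟨Jet.projTo (2*k-1) y, by
          rw [Jet.projCLM_apply, Jet.projTo_projTo (show s+1 ≤ 2*k-1 by omega), Jet.projTo_self]⟩
      have hOM := (Jet.projCLM (2*k-1) (s+1) : Jet n (2*k-1) →L[ℝ] Jet n (s+1)).isOpenMap hsurj
      have := hOM W hW
      rwa [Jet.projCLM_coe] at this
    · rintro q ⟨x, hxW, rfl⟩
      exact hGvanish x hxW
    · rw [Jet.projTo_projTo (Nat.le_add_right (s+1) j)]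
      exact ⟨p, hp, rfl⟩
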